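/- Asymptotic typicality of maximal observational entropy under approximate 2-designs: Let ε ≥ 0, τ > 0, and M > 0. For each dimension d ≥ 2, let E_d = {(p_i^{(d)}, U_i^{(d)})}_i be a finite ensemble of unitaries on ℂ^d such that for every unit vector φ ∈ ℂ^d and every positive semidefinite P ≤ I, Σ_i p_i^{(d)} |Tr[U_i^{(d)} |φ⟩⟨φ| U_i^{(d)†} P] − Tr[u P]|² ≤ (1 + ε)·(4/d); let P^(d) be a POVM on ℂ^d with finite outcome set, all volume terms strictly positive, and κ(d) := min_x Tr[u P^(d)_x] ≥ M · d^{−1/3+τ} for all sufficiently large d; and let ρ_d be an arbitrary density matrix on ℂ^d. Then for every δ > 0, the E_d-probability of the event S_{P^(d)}(U ρ_d U†) > (1 − δ) log d, i.e. Σ_{i : S_{P^(d)}(U_i^{(d)} ρ_d U_i^{(d)†}) > (1−δ) log d} p_i^{(d)}, tends to 1 as d → ∞. -/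

import Mathlib

/-!
Fix an outcome `x` and write `q_x = Tr[P_x UρU†]`, `u_x = Tr[u P_x] ≥ κ`. The second-moment
bound, which extends from pure to mixed states because it is convex in the state, and
Chebyshev's inequality make `|q_x - u_x| ≥ t := κ δ log d / 2` an event of probability at most
`(1 + ε)(4/d) / t²`. There are at most `1/κ` outcomes, so by the union bound some outcome deviates
with probability at most `16 (1 + ε) / (δ² κ³ d log² d)`, which tends to `0` because
`κ³ d ≥ M³ d^{3τ}`. If no outcome deviates then `q_x ≤ (1 + δ log d / 2) u_x` for all `x`, and
since `S_P(σ) = log d - D(q ‖ u)` and `log y ≤ y - 1`, the entropy is at least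
`(1 - δ / 2) log d`.
-/

open MeasureTheory Matrix Finset Filter
open scoped ComplexOrder

noncomputable section

/-- Borel-measurable structure on `d × d` complex matrices (entrywise). -/
instance matrixMeasurableSpace {d : ℕ} : MeasurableSpace (Matrix (Fin d) (Fin d) ℂ) :=
  inferInstanceAs (MeasurableSpace ((Fin d) → (Fin d) → ℂ))

/-- The maximally mixed state `u = I / d` on `ℂ^d`. -/
def mmix (d : ℕ) : Matrix (Fin d) (Fin d) ℂ := (d : ℂ)⁻¹ • 1

/-- Observational entropy of the state `ρ` with respect to the POVM `P = {P_x}`: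
`S_P(ρ) = -∑_x Tr[P_x ρ] · log (Tr[P_x ρ] / Tr[P_x])` (natural log, `0 · log 0 = 0`). -/
def obsEnt {d : ℕ} {X : Type*} [Fintype X]
    (P : X → Matrix (Fin d) (Fin d) ℂ) (ρ : Matrix (Fin d) (Fin d) ℂ) : ℝ :=
  -∑ x, ((P x * ρ).trace.re) * Real.log (((P x * ρ).trace.re) / ((P x).trace.re))

/-- `κ(P) = min_x Tr[u P_x]`. -/
def kappa {d : ℕ} {X : Type*} [Fintype X] [Nonempty X]
    (P : X → Matrix (Fin d) (Fin d) ℂ) : ℝ :=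
  ⨅ x, ((mmix d * P x).trace.re)

/-- Frobenius (Hilbert–Schmidt) norm `‖A‖₂ = √(Tr[A† A])`. -/
def frob {d : ℕ} (A : Matrix (Fin d) (Fin d) ℂ) : ℝ := Real.sqrt ((Aᴴ * A).trace.re)

namespace Matrix

theorem posSemidef_one_sub_of_sum_eq_one {n X : Type*} [DecidableEq n] [Fintype X]
    [DecidableEq X] {P : X → Matrix n n ℂ} (hP : ∀ x, (P x).PosSemidef) (hsum : ∑ x, P x = 1) (x : X) :
    (1 - P x).PosSemidef := by
  rw [← hsum, ← Finset.add_sum_erase _ _ (Finset.mem_univ x), add_sub_cancel_left]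
  exact posSemidef_sum _ fun y _ => hP y

variable {n : Type*} [Fintype n] [DecidableEq n]

open scoped MatrixOrder Matrix.Norms.L2Operator in
theorem PosSemidef.re_trace_mul_nonneg {A B : Matrix n n ℂ} (hA : A.PosSemidef)
    (hB : B.PosSemidef) : 0 ≤ (A * B).trace.re := by
  obtain ⟨C, rfl⟩ := CStarAlgebra.nonneg_iff_eq_star_mul_self.mp hA.nonneg
  rw [Matrix.mul_assoc, trace_mul_comm]
  exact (Complex.le_def.mp (hB.mul_mul_conjTranspose_same C).trace_nonneg).1

theorem IsHermitian.eq_sum_smul_vecMulVec {𝕜 : Type*} [RCLike 𝕜] {A : Matrix n n 𝕜}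
    (hA : A.IsHermitian) :
    A = ∑ k, (hA.eigenvalues k : 𝕜) •
      vecMulVec (hA.eigenvectorBasis k) (star (hA.eigenvectorBasis k)) := by
  conv_lhs => rw [hA.spectral_theorem]
  ext i j
  simp only [Unitary.conjStarAlgAut_apply, mul_apply, star_apply, diagonal_apply,
    eigenvectorUnitary_apply, sum_apply, smul_apply, vecMulVec_apply]
  simp only [Function.comp_apply, mul_ite, mul_zero, Finset.sum_ite_eq', Finset.mem_univ,
    if_true, smul_eq_mul, Pi.star_apply]
  exact Finset.sum_congr rfl fun _ _ => by ring

theorem PosSemidef.exists_eq_sum_smul_vecMulVec {ρ : Matrix n n ℂ} (hρ : ρ.PosSemidef)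
    (htr : ρ.trace = 1) :
    ∃ (c : n → ℝ) (φ : n → n → ℂ), (∀ k, 0 ≤ c k) ∧ ∑ k, c k = 1 ∧
      (∀ k, star (φ k) ⬝ᵥ φ k = 1) ∧ ρ = ∑ k, (c k : ℂ) • vecMulVec (φ k) (star (φ k)) := by
  refine ⟨hρ.1.eigenvalues, fun k => hρ.1.eigenvectorBasis k, hρ.eigenvalues_nonneg, ?_,
    fun k => ?_, hρ.1.eq_sum_smul_vecMulVec⟩
  · exact Complex.ofReal_eq_one.mp
      ((RCLike.ofReal_sum (K := ℂ) _ _).trans (htr ▸ hρ.1.trace_eq_sum_eigenvalues).symm)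
  · rw [dotProduct_comm, ← EuclideanSpace.inner_eq_star_dotProduct]
    simp [hρ.1.eigenvectorBasis.orthonormal.1 k]

theorem sum_re_trace_mul_eq_one {X : Type*} [Fintype X] {P : X → Matrix n n ℂ}
    (hsum : ∑ x, P x = 1) {σ : Matrix n n ℂ} (hσ : σ.trace = 1) :
    ∑ x, (P x * σ).trace.re = 1 := by
  rw [← Complex.re_sum, ← trace_sum, ← Finset.sum_mul, hsum, Matrix.one_mul, hσ, Complex.one_re]

theorem trace_mul_mul_conjTranspose_of_mem_unitaryGroup {U : Matrix n n ℂ}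
    (hU : U ∈ unitaryGroup n ℂ) (σ : Matrix n n ℂ) :
    (U * σ * Uᴴ).trace = σ.trace := by
  rw [trace_mul_cycle, ← star_eq_conjTranspose, mem_unitaryGroup_iff'.mp hU, Matrix.one_mul]

theorem sum_mul_sq_abs_sub_le_of_forall_pure {ι : Type*} [Fintype ι] {p : ι → ℝ}
    (hp : ∀ i, 0 ≤ p i) (U : ι → Matrix n n ℂ) (Pm : Matrix n n ℂ) {ρ : Matrix n n ℂ}
    (hρ : ρ.PosSemidef) (htr : ρ.trace = 1) {u₀ A : ℝ}
    (hpure : ∀ φ : n → ℂ, star φ ⬝ᵥ φ = 1 →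
      ∑ i, p i * |(Pm * (U i * vecMulVec φ (star φ) * (U i)ᴴ)).trace.re - u₀| ^ 2 ≤ A) :
    ∑ i, p i * |(Pm * (U i * ρ * (U i)ᴴ)).trace.re - u₀| ^ 2 ≤ A := by
  obtain ⟨c, φ, hc0, hc1, hφ, rfl⟩ := hρ.exists_eq_sum_smul_vecMulVec htr
  set r : ι → n → ℝ := fun i k => (Pm * (U i * vecMulVec (φ k) (star (φ k)) * (U i)ᴴ)).trace.re
  have hlin : ∀ i, (Pm * (U i * (∑ k, (c k : ℂ) • vecMulVec (φ k) (star (φ k))) * (U i)ᴴ)).trace.re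
      - u₀ = ∑ k, c k * (r i k - u₀) := fun i => by
    simp only [Matrix.mul_sum, Matrix.sum_mul, Matrix.mul_smul, Matrix.smul_mul, trace_sum,
      trace_smul, Complex.re_sum, smul_eq_mul, Complex.re_ofReal_mul, mul_sub,
      Finset.sum_sub_distrib, ← Finset.sum_mul, hc1, one_mul, r]
  have hjensen : ∀ i, (∑ k, c k * (r i k - u₀)) ^ 2 ≤ ∑ k, c k * (r i k - u₀) ^ 2 := fun i =>
    (even_two.convexOn_pow).map_sum_le (fun k _ => hc0 k) hc1 (fun _ _ => Set.mem_univ _)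
  calc ∑ i, p i * |(Pm * (U i * (∑ k, (c k : ℂ) • vecMulVec (φ k) (star (φ k))) * (U i)ᴴ)).trace.re
        - u₀| ^ 2
      ≤ ∑ i, p i * ∑ k, c k * (r i k - u₀) ^ 2 := by
        gcongr with i
        · exact hp i
        · rw [sq_abs, hlin]; exact hjensen i
    _ = ∑ k, c k * ∑ i, p i * |r i k - u₀| ^ 2 := by
        simp only [Finset.mul_sum, sq_abs]
        rw [Finset.sum_comm]
        exact Finset.sum_congr rfl fun _ _ => Finset.sum_congr rfl fun _ _ => by ring
    _ ≤ ∑ k, c k * A := by gcongr with k; exacts [hc0 k, hpure (φ k) (hφ k)]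
    _ = A := by rw [← Finset.sum_mul, hc1, one_mul]

end Matrix

open Classical in
theorem sum_filter_exists_le_sum_sum_sq_div {ι X : Type*} [Fintype ι] [Fintype X] {p : ι → ℝ}
    (hp : ∀ i, 0 ≤ p i) (b : X → ι → ℝ) {t : ℝ} (ht : 0 < t) :
    ∑ i ∈ univ.filter (fun i => ∃ x, t ≤ |b x i|), p i ≤ ∑ x, ∑ i, p i * |b x i| ^ 2 / t ^ 2 := by
  have hone : ∀ i ∈ univ.filter (fun i => ∃ x, t ≤ |b x i|), 1 ≤ ∑ x, |b x i| ^ 2 / t ^ 2 := by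
    intro i hi
    obtain ⟨x, hx⟩ := (mem_filter.mp hi).2
    calc 1 ≤ |b x i| ^ 2 / t ^ 2 := by
          rw [one_le_div (by positivity)]; exact pow_le_pow_left₀ ht.le hx 2
      _ ≤ ∑ x, |b x i| ^ 2 / t ^ 2 :=
          single_le_sum (f := fun x => |b x i| ^ 2 / t ^ 2) (fun _ _ => by positivity) (mem_univ x)
  calc ∑ i ∈ univ.filter (fun i => ∃ x, t ≤ |b x i|), p i
      ≤ ∑ i ∈ univ.filter (fun i => ∃ x, t ≤ |b x i|), p i * ∑ x, |b x i| ^ 2 / t ^ 2 :=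
        sum_le_sum fun i hi => le_mul_of_one_le_right (hp i) (hone i hi)
    _ ≤ ∑ i, p i * ∑ x, |b x i| ^ 2 / t ^ 2 :=
        sum_le_sum_of_subset_of_nonneg (filter_subset _ _) fun i _ _ =>
          mul_nonneg (hp i) (sum_nonneg fun _ _ => by positivity)
    _ = ∑ x, ∑ i, p i * |b x i| ^ 2 / t ^ 2 := by
        simp only [mul_sum, mul_div_assoc]
        exact sum_comm

section Entropy

variable {X : Type*} [Fintype X] {q u : X → ℝ}

theorem sum_mul_log_div_le_of_le_mul (hq0 : ∀ x, 0 ≤ q x) (hq1 : ∑ x, q x = 1)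
    (hu : ∀ x, 0 < u x) {s : ℝ} (hqu : ∀ x, q x ≤ (1 + s) * u x) :
    ∑ x, q x * Real.log (q x / u x) ≤ s := by
  calc ∑ x, q x * Real.log (q x / u x) ≤ ∑ x, q x * s := by
        refine sum_le_sum fun x _ => ?_
        rcases (hq0 x).eq_or_lt with h | h
        · simp [← h]
        refine mul_le_mul_of_nonneg_left ?_ h.le
        calc Real.log (q x / u x) ≤ q x / u x - 1 := Real.log_le_sub_one_of_pos (div_pos h (hu x))
          _ ≤ s := by rw [sub_le_iff_le_add', div_le_iff₀ (hu x)]; exact hqu x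
    _ = s := by rw [← sum_mul, hq1, one_mul]

theorem neg_sum_mul_log_div_mul (hq1 : ∑ x, q x = 1) (hu : ∀ x, u x ≠ 0) {D : ℝ} (hD : D ≠ 0) :
    -∑ x, q x * Real.log (q x / (D * u x)) = Real.log D - ∑ x, q x * Real.log (q x / u x) := by
  have hterm : ∀ x, q x * Real.log (q x / (D * u x)) =
      q x * Real.log (q x / u x) - q x * Real.log D := fun x => by
    rcases eq_or_ne (q x) 0 with h | h
    · simp [h]
    · rw [mul_comm D, ← div_div, Real.log_div (div_ne_zero h (hu x)) hD, mul_sub]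
  simp only [hterm, sum_sub_distrib, ← sum_mul, hq1, one_mul]
  ring

end Entropy

section POVM

variable {d : ℕ} {X : Type*} [Fintype X] {P : X → Matrix (Fin d) (Fin d) ℂ}

theorem re_trace_mmix_mul (A : Matrix (Fin d) (Fin d) ℂ) :
    (mmix d * A).trace.re = A.trace.re / d := by
  simp [mmix, ← Complex.ofReal_natCast, ← Complex.ofReal_inv, div_eq_inv_mul]

theorem sum_re_trace_mmix_mul (hsum : ∑ x, P x = 1) (hd : d ≠ 0) :
    ∑ x, (mmix d * P x).trace.re = 1 := by
  simp_rw [re_trace_mmix_mul, ← sum_div, ← Complex.re_sum, ← trace_sum, hsum, trace_one]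
  simp [hd]

theorem kappa_le [Nonempty X] (P : X → Matrix (Fin d) (Fin d) ℂ) (x : X) :
    kappa P ≤ (mmix d * P x).trace.re :=
  ciInf_le (Set.finite_range _).bddBelow x

theorem card_mul_kappa_le_one [Nonempty X] (hsum : ∑ x, P x = 1) (hd : d ≠ 0) :
    Fintype.card X * kappa P ≤ 1 := by
  calc Fintype.card X * kappa P = ∑ _x : X, kappa P := by simp
    _ ≤ ∑ x, (mmix d * P x).trace.re := sum_le_sum fun x _ => kappa_le P x
    _ = 1 := sum_re_trace_mmix_mul hsum hd

theorem lt_obsEnt_of_forall_sub_le [Nonempty X] (hd : 2 ≤ d) (hP : ∀ x, (P x).PosSemidef)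
    (hsum : ∑ x, P x = 1) (hκ : 0 < kappa P) {σ : Matrix (Fin d) (Fin d) ℂ}
    (hσ : σ.PosSemidef) (hσtr : σ.trace = 1) {δ : ℝ} (hδ : 0 < δ)
    (hdev : ∀ x, (P x * σ).trace.re - (mmix d * P x).trace.re ≤ kappa P * (δ * Real.log d) / 2) :
    (1 - δ) * Real.log d < obsEnt P σ := by
  have hL : 0 < Real.log d := Real.log_pos (by exact_mod_cast hd)
  have hd0 : (d : ℝ) ≠ 0 := by positivity
  have hu : ∀ x, 0 < (mmix d * P x).trace.re := fun x => hκ.trans_le (kappa_le P x)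
  have hV : ∀ x, (P x).trace.re = d * (mmix d * P x).trace.re := fun x => by
    rw [re_trace_mmix_mul]; field_simp
  have hrel : ∑ x, (P x * σ).trace.re * Real.log ((P x * σ).trace.re / (mmix d * P x).trace.re)
      ≤ δ * Real.log d / 2 := by
    refine sum_mul_log_div_le_of_le_mul (fun x => (hP x).re_trace_mul_nonneg hσ)
      (sum_re_trace_mul_eq_one hsum hσtr) hu fun x => ?_
    have := mul_le_mul_of_nonneg_right (kappa_le P x) (by positivity : 0 ≤ δ * Real.log d / 2)
    linarith [hdev x]
  rw [obsEnt]
  simp_rw [hV]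
  rw [neg_sum_mul_log_div_mul (sum_re_trace_mul_eq_one hsum hσtr) (fun x => (hu x).ne') hd0]
  nlinarith [mul_pos hδ hL]

end POVM

open Classical in
theorem one_sub_le_sum_filter_lt_obsEnt {d : ℕ} (hd : 2 ≤ d) {ι : Type*} [Fintype ι]
    {p : ι → ℝ} (hp0 : ∀ i, 0 ≤ p i) (hp1 : ∑ i, p i = 1) {U : ι → Matrix (Fin d) (Fin d) ℂ}
    (hU : ∀ i, U i ∈ unitaryGroup (Fin d) ℂ) {A : ℝ} (hA : 0 ≤ A)
    (hdesign : ∀ φ : Fin d → ℂ, star φ ⬝ᵥ φ = 1 →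
      ∀ Pm : Matrix (Fin d) (Fin d) ℂ, Pm.PosSemidef → (1 - Pm).PosSemidef →
        ∑ i, p i * |(Pm * (U i * vecMulVec φ (star φ) * (U i)ᴴ)).trace.re -
          (mmix d * Pm).trace.re| ^ 2 ≤ A)
    {X : Type*} [Fintype X] [Nonempty X] {P : X → Matrix (Fin d) (Fin d) ℂ}
    (hP : ∀ x, (P x).PosSemidef) (hsum : ∑ x, P x = 1) (hκ : 0 < kappa P)
    {ρ : Matrix (Fin d) (Fin d) ℂ} (hρ : ρ.PosSemidef) (hρtr : ρ.trace = 1) {δ : ℝ} (hδ : 0 < δ) :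
    1 - 4 * A / (δ ^ 2 * kappa P ^ 3 * Real.log d ^ 2) ≤
      ∑ i ∈ univ.filter (fun i => (1 - δ) * Real.log d < obsEnt P (U i * ρ * (U i)ᴴ)), p i := by
  set κ := kappa P
  set t := κ * (δ * Real.log d) / 2
  have hL : 0 < Real.log d := Real.log_pos (by exact_mod_cast hd)
  have ht : 0 < t := by positivity
  set dev : X → ι → ℝ := fun x i =>
    (P x * (U i * ρ * (U i)ᴴ)).trace.re - (mmix d * P x).trace.re
  have hbad : univ.filter (fun i => ¬ (1 - δ) * Real.log d < obsEnt P (U i * ρ * (U i)ᴴ)) ⊆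
      univ.filter (fun i => ∃ x, t ≤ |dev x i|) := by
    intro i
    simp only [mem_filter, mem_univ, true_and]
    contrapose!
    intro hi
    exact lt_obsEnt_of_forall_sub_le hd hP hsum hκ (hρ.mul_mul_conjTranspose_same (U i))
      ((trace_mul_mul_conjTranspose_of_mem_unitaryGroup (hU i) ρ).trans hρtr) hδ
      fun x => ((le_abs_self _).trans_lt (hi x)).le
  have hmoment : ∀ x, ∑ i, p i * |dev x i| ^ 2 ≤ A := fun x =>
    sum_mul_sq_abs_sub_le_of_forall_pure hp0 U (P x) hρ hρtr fun φ hφ =>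
      hdesign φ hφ (P x) (hP x) (posSemidef_one_sub_of_sum_eq_one hP hsum x)
  have hbad_le : ∑ i ∈ univ.filter (fun i => ¬ (1 - δ) * Real.log d < obsEnt P (U i * ρ * (U i)ᴴ)),
      p i ≤ 4 * A / (δ ^ 2 * κ ^ 3 * Real.log d ^ 2) :=
    calc _ ≤ ∑ i ∈ univ.filter (fun i => ∃ x, t ≤ |dev x i|), p i :=
          sum_le_sum_of_subset_of_nonneg hbad fun i _ _ => hp0 i
      _ ≤ ∑ x, ∑ i, p i * |dev x i| ^ 2 / t ^ 2 := sum_filter_exists_le_sum_sum_sq_div hp0 dev ht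
      _ ≤ ∑ _x : X, A / t ^ 2 := by
          gcongr with x
          rw [← sum_div]
          exact div_le_div_of_nonneg_right (hmoment x) (by positivity)
      _ = Fintype.card X * κ * (A / (κ * t ^ 2)) := by
          rw [sum_const, card_univ, nsmul_eq_mul]; field_simp
      _ ≤ 1 * (A / (κ * t ^ 2)) := by
          gcongr
          exact card_mul_kappa_le_one hsum (by omega)
      _ = 4 * A / (δ ^ 2 * κ ^ 3 * Real.log d ^ 2) := by ring
  have hsplit := sum_filter_add_sum_filter_not univ
    (fun i => (1 - δ) * Real.log d < obsEnt P (U i * ρ * (U i)ᴴ)) p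
  linarith

theorem tendsto_cube_mul_mul_log_sq_atTop {κ : ℕ → ℝ} {M τ : ℝ} (hM : 0 < M) (hτ : 0 < τ)
    (hκ : ∀ᶠ d : ℕ in atTop, M * (d : ℝ) ^ (-(1/3 : ℝ) + τ) ≤ κ d) :
    Tendsto (fun d : ℕ => κ d ^ 3 * d * Real.log d ^ 2) atTop atTop := by
  have hpow : Tendsto (fun d : ℕ => M ^ 3 * (d : ℝ) ^ (3 * τ)) atTop atTop :=
    ((tendsto_rpow_atTop (by positivity)).comp tendsto_natCast_atTop_atTop).const_mul_atTop
      (by positivity)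
  refine tendsto_atTop_mono' atTop ?_ hpow
  filter_upwards [hκ, eventually_ge_atTop 3] with d hκd hd
  have hd0 : (0 : ℝ) < d := by positivity
  have hL : 1 ≤ Real.log d := by
    rw [Real.le_log_iff_exp_le hd0]
    exact (Real.exp_one_lt_d9.trans_le (by norm_num)).le.trans (by exact_mod_cast hd : (3 : ℝ) ≤ d)
  calc M ^ 3 * (d : ℝ) ^ (3 * τ) = (M * (d : ℝ) ^ (-(1/3 : ℝ) + τ)) ^ 3 * d := by
        rw [mul_pow, ← Real.rpow_natCast ((d : ℝ) ^ _) 3, ← Real.rpow_mul hd0.le, mul_assoc,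
          ← Real.rpow_add_one hd0.ne']
        congr 2
        push_cast
        ring
    _ ≤ κ d ^ 3 * d * 1 := by rw [mul_one]; gcongr
    _ ≤ κ d ^ 3 * d * Real.log d ^ 2 := by
        have hκ0 : 0 ≤ κ d := (by positivity : (0 : ℝ) ≤ M * (d : ℝ) ^ (-(1/3 : ℝ) + τ)).trans hκd
        gcongr
        nlinarith

open Classical in
theorem design_asymptotic_typicality_general (ε τ M : ℝ) (hε : 0 ≤ ε) (hτ : 0 < τ) (hM : 0 < M)
    (N : ℕ → ℕ) (p : ∀ d, Fin (N d) → ℝ) (U : ∀ d, Fin (N d) → Matrix (Fin d) (Fin d) ℂ)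
    (hp0 : ∀ d i, 0 ≤ p d i) (hp1 : ∀ d, 2 ≤ d → ∑ i, p d i = 1)
    (hU : ∀ d, 2 ≤ d → ∀ i, U d i ∈ Matrix.unitaryGroup (Fin d) ℂ)
    (hdesign : ∀ d, 2 ≤ d → ∀ φ : Fin d → ℂ, star φ ⬝ᵥ φ = 1 →
      ∀ Pm : Matrix (Fin d) (Fin d) ℂ, Pm.PosSemidef →
        ((1 : Matrix (Fin d) (Fin d) ℂ) - Pm).PosSemidef →
        ∑ i, p d i * |(Pm * (U d i * Matrix.vecMulVec φ (star φ) * (U d i)ᴴ)).trace.re -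
            ((mmix d) * Pm).trace.re| ^ 2
          ≤ (1 + ε) * (4 / d))
    (X : ℕ → Type) [∀ d, Fintype (X d)] [∀ d, Nonempty (X d)]
    (P : ∀ d, X d → Matrix (Fin d) (Fin d) ℂ)
    (hPpos : ∀ d, 2 ≤ d → ∀ x, ((P d) x).PosSemidef)
    (hPsum : ∀ d, 2 ≤ d → ∑ x, (P d) x = 1)
    (hκ : ∀ᶠ d : ℕ in atTop, M * (d : ℝ) ^ (-(1/3 : ℝ) + τ) ≤ kappa (P d))
    (ρ : ∀ d, Matrix (Fin d) (Fin d) ℂ)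
    (hρ : ∀ d, 2 ≤ d → (ρ d).PosSemidef ∧ (ρ d).trace = 1)
    (δ : ℝ) (hδ : 0 < δ) :
    Tendsto (fun d : ℕ =>
        ∑ i ∈ Finset.univ.filter (fun i =>
          (1 - δ) * Real.log d < obsEnt (P d) (U d i * ρ d * (U d i)ᴴ)), p d i)
      atTop (nhds 1) := by
  have hlower : Tendsto (fun d : ℕ =>
      1 - 16 * (1 + ε) / δ ^ 2 * (kappa (P d) ^ 3 * d * Real.log d ^ 2)⁻¹) atTop (nhds 1) := by
    simpa using ((tendsto_cube_mul_mul_log_sq_atTop hM hτ hκ).inv_tendsto_atTop.const_mul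
      (16 * (1 + ε) / δ ^ 2)).const_sub 1
  refine tendsto_of_tendsto_of_tendsto_of_le_of_le' hlower tendsto_const_nhds ?_ ?_
  · filter_upwards [hκ, eventually_ge_atTop 2] with d hκd hd
    have hκ0 : 0 < kappa (P d) := (by positivity : 0 < M * (d : ℝ) ^ (-(1/3 : ℝ) + τ)).trans_le hκd
    refine le_of_eq_of_le ?_ (one_sub_le_sum_filter_lt_obsEnt hd (hp0 d) (hp1 d hd) (hU d hd)
      (by positivity) (hdesign d hd) (hPpos d hd) (hPsum d hd) hκ0 (hρ d hd).1 (hρ d hd).2 hδ)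
    ring
  · filter_upwards [eventually_ge_atTop 2] with d hd
    exact (sum_le_sum_of_subset_of_nonneg (filter_subset _ _) fun i _ _ => hp0 d i).trans_eq
      (hp1 d hd)

open Classical in
/-- **Asymptotic typicality of maximal observational entropy under approximate
2-designs:** if for each `d` the ensemble `{(pᵢ⁽ᵈ⁾, Uᵢ⁽ᵈ⁾)}` satisfies the second-moment
bound of `ε`-approximate 2-designs, and the POVM sequence satisfies
`κ(d) ≥ M·d^(-1/3+τ)` for all large `d`, then for any states `ρ_d` and any `δ > 0`, the
ensemble probability of `S_{P⁽ᵈ⁾}(Uρ_dU†) > (1-δ) log d` tends to `1` as `d → ∞`. -/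
theorem design_asymptotic_typicality (ε τ M : ℝ) (hε : 0 ≤ ε) (hτ : 0 < τ) (hM : 0 < M)
    (N : ℕ → ℕ) (p : ∀ d, Fin (N d) → ℝ) (U : ∀ d, Fin (N d) → Matrix (Fin d) (Fin d) ℂ)
    (hp0 : ∀ d i, 0 ≤ p d i) (hp1 : ∀ d, 2 ≤ d → ∑ i, p d i = 1)
    (hU : ∀ d, 2 ≤ d → ∀ i, U d i ∈ Matrix.unitaryGroup (Fin d) ℂ)
    (hdesign : ∀ d, 2 ≤ d → ∀ φ : Fin d → ℂ, star φ ⬝ᵥ φ = 1 →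
      ∀ Pm : Matrix (Fin d) (Fin d) ℂ, Pm.PosSemidef →
        ((1 : Matrix (Fin d) (Fin d) ℂ) - Pm).PosSemidef →
        ∑ i, p d i * |(Pm * (U d i * Matrix.vecMulVec φ (star φ) * (U d i)ᴴ)).trace.re -
            ((mmix d) * Pm).trace.re| ^ 2
          ≤ (1 + ε) * (4 / d))
    (X : ℕ → Type) [∀ d, Fintype (X d)] [∀ d, Nonempty (X d)]
    (P : ∀ d, X d → Matrix (Fin d) (Fin d) ℂ)
    (hPpos : ∀ d, 2 ≤ d → ∀ x, ((P d) x).PosSemidef)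
    (hPsum : ∀ d, 2 ≤ d → ∑ x, (P d) x = 1)
    (hV : ∀ d, 2 ≤ d → ∀ x, 0 < ((P d) x).trace.re)
    (hκ : ∀ᶠ d : ℕ in atTop, M * (d : ℝ) ^ (-(1/3 : ℝ) + τ) ≤ kappa (P d))
    (ρ : ∀ d, Matrix (Fin d) (Fin d) ℂ)
    (hρ : ∀ d, 2 ≤ d → (ρ d).PosSemidef ∧ (ρ d).trace = 1)
    (δ : ℝ) (hδ : 0 < δ) :
    Tendsto (fun d : ℕ =>
        ∑ i ∈ Finset.univ.filter (fun i =>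
          (1 - δ) * Real.log d < obsEnt (P d) (U d i * ρ d * (U d i)ᴴ)), p d i)
      atTop (nhds 1) :=
  design_asymptotic_typicality_general ε τ M hε hτ hM N p U hp0 hp1 hU hdesign X P hPpos hPsum hκ ρ
    hρ δ hδ
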